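/- Let d ≥ 1 and p ≥ 1, and let G₁, G₂ be finitely supported probability measures on ℝ^d × S_d^{++}(ℝ). Then SMix-W_p^p(G₁,G₂) = 0 if and only if G₁ = G₂. -/

import Mathlib

open MeasureTheory ProbabilityTheory Matrix ENNReal
open scoped RealInnerProductSpace

noncomputable section

namespace PaperSOT

/-- `ℝ^d` with the Euclidean norm. -/
abbrev E (d : ℕ) := EuclideanSpace ℝ (Fin d)

/-- real `d × d` matrices. -/
abbrev Mat (d : ℕ) := Matrix (Fin d) (Fin d) ℝ

instance (d : ℕ) : MeasurableSpace (Mat d) :=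
  (inferInstance : MeasurableSpace (Fin d → Fin d → ℝ))

/-- squared Frobenius norm `‖A‖_F² = Tr(Aᵀ A)`. -/
def frobSq {d : ℕ} (A : Mat d) : ℝ := (Aᵀ * A).trace

/-- Frobenius norm `‖A‖_F = sqrt (Tr (Aᵀ A))`. -/
def frobNorm {d : ℕ} (A : Mat d) : ℝ := Real.sqrt (frobSq A)

/-- the (unique, when it exists) symmetric logarithm of a matrix: for a symmetric
positive definite `Σ` this is the unique symmetric `S` with `exp S = Σ`. -/
def symLog {d : ℕ} (M : Mat d) : Mat d := by
  classical exact if h : ∃ S : Mat d, S.IsSymm ∧ NormedSpace.exp S = M then h.choose else 0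

/-- `π` is a coupling of `μ` and `ν`: its marginals are `μ` and `ν`. -/
def IsCoupling {X Y : Type*} [MeasurableSpace X] [MeasurableSpace Y]
    (π : Measure (X × Y)) (μ : Measure X) (ν : Measure Y) : Prop :=
  π.map Prod.fst = μ ∧ π.map Prod.snd = ν

/-- the Wasserstein-`p` cost `W_p^p` between two measures on `ℝ`:
the infimum over couplings of `∫ |x-y|^p dπ`. -/
def Wp (p : ℝ) (ν₁ ν₂ : Measure ℝ) : ℝ≥0∞ :=
  ⨅ (π : Measure (ℝ × ℝ)) (_ : IsCoupling π ν₁ ν₂),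
    ∫⁻ z, ENNReal.ofReal (|z.1 - z.2| ^ p) ∂π

/-- the standard Gaussian measure on `ℝ^d`. -/
def stdGaussianE (d : ℕ) : Measure (E d) :=
  (Measure.pi fun _ : Fin d => gaussianReal 0 1).map
    (MeasurableEquiv.toLp 2 (Fin d → ℝ))

/-- the uniform probability distribution on the unit sphere of `ℝ^d`,
realized as the law of a normalized standard Gaussian vector. -/
def unifSphere (d : ℕ) : Measure (E d) :=
  (stdGaussianE d).map (fun x => ‖x‖⁻¹ • x)

/-- the standard Gaussian measure on `d × d` matrices (i.i.d. standard normal entries). -/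
def stdGaussianMat (d : ℕ) : Measure (Mat d) :=
  (Measure.pi fun _ : Fin d => Measure.pi fun _ : Fin d => gaussianReal 0 1 :
    Measure (Fin d → Fin d → ℝ)).map (fun g => (Matrix.of g : Mat d))

/-- the uniform probability distribution on the unit Frobenius sphere of the space of
real symmetric `d × d` matrices, realized as the law of a Frobenius-normalized isotropic
Gaussian symmetric matrix. -/
def unifSymSphere (d : ℕ) : Measure (Mat d) :=
  (stdGaussianMat d).map (fun g =>
    (frobNorm ((2:ℝ)⁻¹ • (g + gᵀ)))⁻¹ • ((2:ℝ)⁻¹ • (g + gᵀ)))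

/-- the space `S_d^{++}(ℝ)` of real symmetric positive definite `d × d` matrices. -/
abbrev PDMat (d : ℕ) := {M : Mat d // M.PosDef}

/-- the quadratic form `vᵀ M v`. -/
def quad {d : ℕ} (v : E d) (M : Mat d) : ℝ := ∑ i, ∑ j, v i * M i j * v j

/-- the generalized geodesic projection
`P_{V_w}(μ, Σ) = w₁ ⟨μ, v⟩ + w₂ Tr(A log Σ)` on `ℝ^d × S_d^{++}(ℝ)`. -/
def projMix {d : ℕ} (w : E 2) (v : E d) (A : Mat d) (x : E d × PDMat d) : ℝ :=
  w 0 * ⟪x.1, v⟫ + w 1 * (A * symLog x.2.1).trace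

/-- the mixed sliced Wasserstein distance (raised to the power `p`),
`Mix-SW_p^p(G₁,G₂) = ∫ W_p^p(P_{V_w}♯G₁, P_{V_w}♯G₂) dσ(w,v,A)`, where `σ` is the product
of the uniform distributions on the unit circle, the unit sphere of `ℝ^d` and the unit
Frobenius sphere of symmetric `d × d` matrices. -/
def MixSW (d : ℕ) (p : ℝ) (G₁ G₂ : Measure (E d × PDMat d)) : ℝ≥0∞ :=
  ∫⁻ w, ∫⁻ v, ∫⁻ A,
      Wp p (G₁.map (projMix w v A)) (G₂.map (projMix w v A))
    ∂(unifSymSphere d) ∂(unifSphere d) ∂(unifSphere 2)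

/-- the log-Euclidean distance
`d((μ₁,Σ₁),(μ₂,Σ₂)) = sqrt(‖μ₁-μ₂‖² + ‖log Σ₁ - log Σ₂‖_F²)` on `ℝ^d × S_d^{++}(ℝ)`. -/
def dLE {d : ℕ} (x y : E d × PDMat d) : ℝ :=
  Real.sqrt (‖x.1 - y.1‖ ^ 2 + frobSq (symLog x.2.1 - symLog y.2.1))

/-- the projection `P_{v,w}(μ,Σ) = w₁ ⟨v,μ⟩ + w₂ log √(vᵀ Σ v)` used by the sliced
mixture Wasserstein distance. -/
def projSMix {d : ℕ} (w : E 2) (v : E d) (x : E d × PDMat d) : ℝ :=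
  w 0 * ⟪v, x.1⟫ + w 1 * Real.log (Real.sqrt (quad v x.2.1))

/-- the sliced mixture Wasserstein distance (raised to the power `p`),
`SMix-W_p^p(G₁,G₂) = ∫ W_p^p(P_{v,w}♯G₁, P_{v,w}♯G₂) dσ(w,v)`, where `σ` is the product of
the uniform distributions on the unit circle and on the unit sphere of `ℝ^d`. -/
def SMixW (d : ℕ) (p : ℝ) (G₁ G₂ : Measure (E d × PDMat d)) : ℝ≥0∞ :=
  ∫⁻ w, ∫⁻ v,
      Wp p (G₁.map (projSMix w v)) (G₂.map (projSMix w v))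
    ∂(unifSphere d) ∂(unifSphere 2)

/-- the symmetrized log-Rayleigh quantity
`L(Σ₁,Σ₂) = sup_{‖u‖=1} |log (uᵀΣ₁u / uᵀΣ₂u)|`. -/
def logRayleigh {d : ℕ} (S₁ S₂ : Mat d) : ℝ :=
  sSup {r : ℝ | ∃ u : E d, ‖u‖ = 1 ∧ r = |Real.log (quad u S₁ / quad u S₂)|}

/-- the distance `d_S((μ₁,Σ₁),(μ₂,Σ₂)) = sqrt(‖μ₁-μ₂‖² + (1/4) L(Σ₁,Σ₂)²)`. -/
def dS {d : ℕ} (x y : E d × PDMat d) : ℝ :=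
  Real.sqrt (‖x.1 - y.1‖ ^ 2 + (1/4) * (logRayleigh x.2.1 y.2.1) ^ 2)

/-- a measure is finitely supported if some finite set has full measure. -/
def FinSupp {X : Type*} [MeasurableSpace X] (G : Measure X) : Prop :=
  ∃ s : Finset X, G (↑s : Set X)ᶜ = 0

/-- the Gaussian measure `N(m, Σ)` on `ℝ^d` (with `Σ` positive semidefinite), realized as
the law of `m + Σ^{1/2} Z` for a standard Gaussian vector `Z`. -/
def gaussianE {d : ℕ} (m : E d) {S : Mat d} (hS : S.PosSemidef) : Measure (E d) :=
  (stdGaussianE d).map (fun x =>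
    m + (MeasurableEquiv.toLp 2 (Fin d → ℝ)) (((hS.1.eigenvectorUnitary : Mat d) * diagonal (fun i => Real.sqrt (hS.1.eigenvalues i)) *
      star (hS.1.eigenvectorUnitary : Mat d)).mulVec (fun i => x i)))

/-! ### Auxiliary lemmas for the proof of Statement 16 -/

section Aux

/-- iid standard Gaussian on `Fin n → ℝ`. -/
def piG (n : ℕ) : Measure (Fin n → ℝ) := Measure.pi fun _ => gaussianReal 0 1

instance (n : ℕ) : IsProbabilityMeasure (piG n) := by unfold piG; infer_instance

lemma gauss_null {S : Set ℝ} (h : volume S = 0) : gaussianReal 0 1 S = 0 :=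
  gaussianReal_absolutelyContinuous 0 one_ne_zero h

end Aux
lemma piG_linear_null {n : ℕ} (c : Fin n → ℝ) {k : Fin n} (hk : c k ≠ 0) :
    piG n {f | ∑ i, c i * f i = 0} = 0 := by
  cases n with
  | zero => exact k.elim0
  | succ m =>
  set e := MeasurableEquiv.piFinSuccAbove (fun _ : Fin (m+1) => ℝ) k with he
  have hmp := measurePreserving_piFinSuccAbove (fun _ : Fin (m+1) => gaussianReal 0 1) k
  set B : Set (ℝ × (Fin m → ℝ)) :=
    {z | c k * z.1 + ∑ j, c (k.succAbove j) * z.2 j = 0} with hB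
  have hBm : MeasurableSet B := by
    apply measurableSet_eq_fun
    · exact (measurable_fst.const_mul _).add
        (Finset.measurable_sum _ fun j _ => (measurable_snd.eval).const_mul _)
    · exact measurable_const
  have hpre : {f : Fin (m+1) → ℝ | ∑ i, c i * f i = 0} = e ⁻¹' B := by
    ext f
    simp only [Set.mem_setOf_eq, Set.mem_preimage, hB, he,
      MeasurableEquiv.piFinSuccAbove_apply, Fin.insertNthEquiv, Equiv.coe_fn_symm_mk]
    rw [Fin.sum_univ_succAbove (fun i => c i * f i) k]
    simp [Fin.removeNth]
  have key : piG (m+1) (e ⁻¹' B)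
      = ((gaussianReal 0 1).prod (Measure.pi fun _ : Fin m => gaussianReal 0 1)) B :=
    hmp.measure_preimage hBm.nullMeasurableSet
  rw [hpre, key, Measure.prod_apply_symm hBm]
  have hsec : ∀ g : Fin m → ℝ, gaussianReal 0 1 ((fun t => (t, g)) ⁻¹' B) = 0 := by
    intro g
    apply gauss_null
    have : ((fun t => (t, g)) ⁻¹' B) ⊆ {(-(∑ j, c (k.succAbove j) * g j)) / c k} := by
      intro t ht
      simp only [Set.mem_preimage, hB, Set.mem_setOf_eq] at ht
      simp only [Set.mem_singleton_iff]
      field_simp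
      linarith
    exact measure_mono_null this (measure_singleton _)
  simp [hsec]
lemma quad_expand {m : ℕ} (D : Matrix (Fin (m+1)) (Fin (m+1)) ℝ) (i : Fin (m+1))
    (v : Fin (m+1) → ℝ) :
    ∑ a, ∑ b, v a * D a b * v b
      = D i i * (v i) ^ 2
        + (∑ k, (D i (i.succAbove k) + D (i.succAbove k) i) * v (i.succAbove k)) * v i
        + ∑ a, ∑ b, v (i.succAbove a) * D (i.succAbove a) (i.succAbove b) * v (i.succAbove b) := by
  rw [Fin.sum_univ_succAbove (fun a => ∑ b, v a * D a b * v b) i]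
  rw [Fin.sum_univ_succAbove (fun b => v i * D i b * v b) i]
  have h2 : ∀ a, ∑ b, v (i.succAbove a) * D (i.succAbove a) b * v b
      = v (i.succAbove a) * D (i.succAbove a) i * v i
        + ∑ b, v (i.succAbove a) * D (i.succAbove a) (i.succAbove b) * v (i.succAbove b) :=
    fun a => Fin.sum_univ_succAbove _ i
  simp_rw [h2]
  rw [Finset.sum_add_distrib, Finset.sum_mul]
  simp_rw [add_mul]
  rw [Finset.sum_add_distrib]
  have e1 : ∑ k, D i (i.succAbove k) * v (i.succAbove k) * v i
      = ∑ b, v i * D i (i.succAbove b) * v (i.succAbove b) :=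
    Finset.sum_congr rfl fun b _ => by ring
  have e2 : ∑ k, D (i.succAbove k) i * v (i.succAbove k) * v i
      = ∑ a, v (i.succAbove a) * D (i.succAbove a) i * v i :=
    Finset.sum_congr rfl fun a _ => by ring
  rw [e1, e2]
  ring

lemma piG_quad_null {n : ℕ} (D : Matrix (Fin n) (Fin n) ℝ)
    (hsym : ∀ a b, D a b = D b a) {i j : Fin n} (hij : D i j ≠ 0) :
    piG n {f | ∑ a, ∑ b, f a * D a b * f b = 0} = 0 := by
  cases n with
  | zero => exact i.elim0
  | succ m =>
  -- choose splitting index: `i` if some diagonal entry nonzero (then wlog at that index), else `i`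
  by_cases hdiag : ∃ a, D a a ≠ 0
  · obtain ⟨a, ha⟩ := hdiag
    set e := MeasurableEquiv.piFinSuccAbove (fun _ : Fin (m+1) => ℝ) a with he
    have hmp := measurePreserving_piFinSuccAbove (fun _ : Fin (m+1) => gaussianReal 0 1) a
    set B : Set (ℝ × (Fin m → ℝ)) :=
      {z | D a a * z.1 ^ 2
        + (∑ k, (D a (a.succAbove k) + D (a.succAbove k) a) * z.2 k) * z.1
        + (∑ s, ∑ t, z.2 s * D (a.succAbove s) (a.succAbove t) * z.2 t) = 0} with hB
    have hm1 : Measurable fun z : ℝ × (Fin m → ℝ) => D a a * z.1 ^ 2 :=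
      (measurable_fst.pow_const 2).const_mul _
    have hm2 : Measurable fun z : ℝ × (Fin m → ℝ) =>
        (∑ k, (D a (a.succAbove k) + D (a.succAbove k) a) * z.2 k) * z.1 :=
      (Finset.measurable_sum _ fun k _ =>
        ((measurable_pi_apply k).comp measurable_snd).const_mul _).mul measurable_fst
    have hm3 : Measurable fun z : ℝ × (Fin m → ℝ) =>
        ∑ s, ∑ t, z.2 s * D (a.succAbove s) (a.succAbove t) * z.2 t :=
      Finset.measurable_sum _ fun s _ => Finset.measurable_sum _ fun t _ =>
        (((measurable_pi_apply s).comp measurable_snd).mul_const _).mul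
          ((measurable_pi_apply t).comp measurable_snd)
    have hBm : MeasurableSet B :=
      measurableSet_eq_fun ((hm1.add hm2).add hm3) measurable_const
    have hpre : {f : Fin (m+1) → ℝ | ∑ x, ∑ y, f x * D x y * f y = 0} = e ⁻¹' B := by
      ext f
      simp only [Set.mem_setOf_eq, Set.mem_preimage, hB, he,
        MeasurableEquiv.piFinSuccAbove_apply, Fin.insertNthEquiv, Equiv.coe_fn_symm_mk,
        Fin.removeNth]
      rw [quad_expand D a f]
    have key : piG (m+1) (e ⁻¹' B)
        = ((gaussianReal 0 1).prod (Measure.pi fun _ : Fin m => gaussianReal 0 1)) B :=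
      hmp.measure_preimage hBm.nullMeasurableSet
    rw [hpre, key, Measure.prod_apply_symm hBm]
    have hsec : ∀ g : Fin m → ℝ, gaussianReal 0 1 ((fun t => (t, g)) ⁻¹' B) = 0 := by
      intro g
      apply gauss_null
      set β := ∑ k, (D a (a.succAbove k) + D (a.succAbove k) a) * g k
      set γ := ∑ s, ∑ t, g s * D (a.succAbove s) (a.succAbove t) * g t
      have hroots : ((fun t => (t, g)) ⁻¹' B)
          ⊆ {x | (Polynomial.C (D a a) * Polynomial.X ^ 2 + Polynomial.C β * Polynomial.X
              + Polynomial.C γ).IsRoot x} := by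
        intro t ht
        simp only [Set.mem_preimage, hB, Set.mem_setOf_eq] at ht
        simp only [Set.mem_setOf_eq, Polynomial.IsRoot, Polynomial.eval_add,
          Polynomial.eval_mul, Polynomial.eval_pow, Polynomial.eval_C, Polynomial.eval_X]
        linarith
      have hpne : (Polynomial.C (D a a) * Polynomial.X ^ 2 + Polynomial.C β * Polynomial.X
          + Polynomial.C γ : Polynomial ℝ) ≠ 0 := by
        intro hzero
        have := congrArg (Polynomial.coeff · 2) hzero
        simp [Polynomial.coeff_add, Polynomial.coeff_C_mul, Polynomial.coeff_C,
          Polynomial.coeff_X, Polynomial.coeff_X_pow] at this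
        exact ha this
      exact measure_mono_null hroots
        ((Polynomial.finite_setOf_isRoot hpne).measure_zero _)
    simp [hsec]
  · push_neg at hdiag
    have hji : j ≠ i := by intro h; subst h; exact hij (hdiag j)
    obtain ⟨k₀, hk₀⟩ : ∃ k, i.succAbove k = j := Fin.exists_succAbove_eq hji
    set e := MeasurableEquiv.piFinSuccAbove (fun _ : Fin (m+1) => ℝ) i with he
    have hmp := measurePreserving_piFinSuccAbove (fun _ : Fin (m+1) => gaussianReal 0 1) i
    set B : Set (ℝ × (Fin m → ℝ)) :=
      {z | D i i * z.1 ^ 2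
        + (∑ k, (D i (i.succAbove k) + D (i.succAbove k) i) * z.2 k) * z.1
        + (∑ s, ∑ t, z.2 s * D (i.succAbove s) (i.succAbove t) * z.2 t) = 0} with hB
    have hm1 : Measurable fun z : ℝ × (Fin m → ℝ) => D i i * z.1 ^ 2 :=
      (measurable_fst.pow_const 2).const_mul _
    have hm2 : Measurable fun z : ℝ × (Fin m → ℝ) =>
        (∑ k, (D i (i.succAbove k) + D (i.succAbove k) i) * z.2 k) * z.1 :=
      (Finset.measurable_sum _ fun k _ =>
        ((measurable_pi_apply k).comp measurable_snd).const_mul _).mul measurable_fst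
    have hm3 : Measurable fun z : ℝ × (Fin m → ℝ) =>
        ∑ s, ∑ t, z.2 s * D (i.succAbove s) (i.succAbove t) * z.2 t :=
      Finset.measurable_sum _ fun s _ => Finset.measurable_sum _ fun t _ =>
        (((measurable_pi_apply s).comp measurable_snd).mul_const _).mul
          ((measurable_pi_apply t).comp measurable_snd)
    have hBm : MeasurableSet B :=
      measurableSet_eq_fun ((hm1.add hm2).add hm3) measurable_const
    have hpre : {f : Fin (m+1) → ℝ | ∑ x, ∑ y, f x * D x y * f y = 0} = e ⁻¹' B := by
      ext f
      simp only [Set.mem_setOf_eq, Set.mem_preimage, hB, he,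
        MeasurableEquiv.piFinSuccAbove_apply, Fin.insertNthEquiv, Equiv.coe_fn_symm_mk,
        Fin.removeNth]
      rw [quad_expand D i f]
    have key : piG (m+1) (e ⁻¹' B)
        = ((gaussianReal 0 1).prod (Measure.pi fun _ : Fin m => gaussianReal 0 1)) B :=
      hmp.measure_preimage hBm.nullMeasurableSet
    rw [hpre, key, Measure.prod_apply_symm hBm]
    -- the set of `g` with vanishing linear coefficient is null
    set c : Fin m → ℝ := fun k => D i (i.succAbove k) + D (i.succAbove k) i with hc
    have hck : c k₀ ≠ 0 := by
      simp only [hc, hk₀]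
      rw [hsym j i]
      intro h
      apply hij
      have : (2:ℝ) * D i j = 0 := by rw [two_mul]; linarith [h]
      linarith [this]
    have hnull : (Measure.pi fun _ : Fin m => gaussianReal 0 1) {g | ∑ k, c k * g k = 0} = 0 :=
      piG_linear_null c hck
    have hsec : ∀ g : Fin m → ℝ, g ∉ {g : Fin m → ℝ | ∑ k, c k * g k = 0} →
        gaussianReal 0 1 ((fun t => (t, g)) ⁻¹' B) = 0 := by
      intro g hg
      simp only [Set.mem_setOf_eq] at hg
      apply gauss_null
      have hsub : ((fun t => (t, g)) ⁻¹' B)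
          ⊆ {(-(∑ s, ∑ t, g s * D (i.succAbove s) (i.succAbove t) * g t)) / (∑ k, c k * g k)} := by
        intro t ht
        simp only [Set.mem_preimage, hB, Set.mem_setOf_eq, hdiag i, zero_mul, hc] at ht
        simp only [Set.mem_singleton_iff, hc]
        rw [eq_div_iff (by simpa [hc] using hg)]
        linarith
      exact measure_mono_null hsub (measure_singleton _)
    have hae : ∀ᵐ g ∂(Measure.pi fun _ : Fin m => gaussianReal 0 1),
        g ∉ {g : Fin m → ℝ | ∑ k, c k * g k = 0} :=
      MeasureTheory.measure_eq_zero_iff_ae_notMem.1 hnull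
    rw [lintegral_congr_ae (hae.mono fun g hg => hsec g hg)]
    exact lintegral_zero
section Aux2

variable {d : ℕ}

lemma meas_eval (i : Fin d) : Measurable fun v : E d => v i := by
  have := (measurable_pi_apply i).comp (MeasurableEquiv.toLp 2 (Fin d → ℝ)).symm.measurable
  exact this

lemma meas_quadv (M : Mat d) : Measurable fun v : E d => quad v M := by
  unfold quad
  exact Finset.measurable_sum _ fun i _ => Finset.measurable_sum _ fun j _ =>
    ((meas_eval i).mul_const _).mul (meas_eval j)

lemma meas_quadM (v : E d) : Measurable fun M : Mat d => quad v M := by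
  unfold quad
  refine Finset.measurable_sum _ fun i _ => Finset.measurable_sum _ fun j _ => ?_
  have hMij : Measurable fun M : Mat d => M i j :=
    (measurable_pi_apply j).comp (measurable_pi_apply i)
  exact (hMij.const_mul _).mul_const _

lemma quad_smul (c : ℝ) (v : E d) (M : Mat d) : quad (c • v) M = c ^ 2 * quad v M := by
  unfold quad
  rw [Finset.mul_sum]
  refine Finset.sum_congr rfl fun i _ => ?_
  rw [Finset.mul_sum]
  refine Finset.sum_congr rfl fun j _ => ?_
  simp only [PiLp.smul_apply, smul_eq_mul]
  ring

lemma quad_sub (v : E d) (A B : Mat d) : quad v (A - B) = quad v A - quad v B := by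
  unfold quad
  rw [← Finset.sum_sub_distrib]
  refine Finset.sum_congr rfl fun i _ => ?_
  rw [← Finset.sum_sub_distrib]
  refine Finset.sum_congr rfl fun j _ => ?_
  simp only [Matrix.sub_apply]
  ring

lemma quad_pos {M : Mat d} (hM : M.PosDef) {v : E d} (hv : v ≠ 0) : 0 < quad v M := by
  have hfv : (fun i => v i) ≠ 0 := by
    intro h
    apply hv
    ext i
    exact congrFun h i
  have h2 := hM.dotProduct_mulVec_pos hfv
  simp only [dotProduct, Matrix.mulVec, RCLike.re_to_real] at h2
  unfold quad
  refine lt_of_lt_of_eq h2 (Eq.symm ?_)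
  refine Finset.sum_congr rfl fun i _ => ?_
  rw [Finset.mul_sum]
  refine Finset.sum_congr rfl fun j _ => ?_
  simp only [dotProduct, Pi.star_apply, star_trivial]
  ring

instance : MeasurableSingletonClass (E d) :=
  ⟨fun x => (isClosed_singleton (x := x)).measurableSet⟩

instance : MeasurableSingletonClass (Mat d) :=
  (inferInstance : MeasurableSingletonClass (Fin d → Fin d → ℝ))

instance : MeasurableSingletonClass (PDMat d) :=
  Subtype.instMeasurableSingletonClass

lemma nrm_measurable : Measurable fun x : E d => ‖x‖⁻¹ • x :=
  (measurable_norm.inv).smul measurable_id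

instance : IsProbabilityMeasure (stdGaussianE d) := by
  unfold stdGaussianE
  exact Measure.isProbabilityMeasure_map (MeasurableEquiv.measurable _).aemeasurable

instance : IsProbabilityMeasure (unifSphere d) := by
  unfold unifSphere
  exact Measure.isProbabilityMeasure_map nrm_measurable.aemeasurable

lemma unifSphere_apply {S : Set (E d)} (hS : MeasurableSet S) :
    unifSphere d S
      = piG d ((fun f : Fin d → ℝ =>
          (fun x : E d => ‖x‖⁻¹ • x) ((MeasurableEquiv.toLp 2 (Fin d → ℝ)) f)) ⁻¹' S) := by
  unfold unifSphere stdGaussianE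
  rw [Measure.map_apply nrm_measurable hS,
    Measure.map_apply (MeasurableEquiv.measurable _) (nrm_measurable hS)]
  rfl

lemma esymm_apply (f : Fin d → ℝ) (i : Fin d) :
    ((MeasurableEquiv.toLp 2 (Fin d → ℝ)) f) i = f i := by
  rfl

lemma esymm_zero_iff (f : Fin d → ℝ) :
    (MeasurableEquiv.toLp 2 (Fin d → ℝ)) f = 0 ↔ f = 0 := by
  constructor
  · intro h
    funext i
    have := congrFun (congrArg (fun x : E d => (fun j => x j)) h) i
    simpa [esymm_apply] using this
  · intro h
    subst h
    rfl

lemma meas_inner_const (c : E d) : Measurable fun v : E d => ⟪v, c⟫ :=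
  (continuous_id.inner continuous_const).measurable

lemma inner_eval (v c : E d) : ⟪v, c⟫ = ∑ i, v i * c i := by
  rw [PiLp.inner_apply]
  simp [RCLike.inner_apply, mul_comm]

lemma sphere_null_linear {c : E d} (hc : c ≠ 0) :
    unifSphere d {v : E d | ⟪v, c⟫ = 0} = 0 := by
  obtain ⟨k, hk⟩ : ∃ k, c k ≠ 0 := by
    by_contra h
    push_neg at h
    apply hc
    ext i
    exact h i
  rw [unifSphere_apply (measurableSet_eq_fun (meas_inner_const c) measurable_const)]
  refine measure_mono_null ?_ (piG_linear_null (fun i => c i) hk)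
  intro f hf
  simp only [Set.mem_preimage, Set.mem_setOf_eq] at hf
  set x := (MeasurableEquiv.toLp 2 (Fin d → ℝ)) f with hx
  have hxi : ∀ i, x i = f i := fun i => by rw [hx]; exact esymm_apply f i
  rw [real_inner_smul_left, inner_eval] at hf
  rcases mul_eq_zero.1 hf with h0 | h0
  · have hx0 : x = 0 := norm_eq_zero.1 (inv_eq_zero.1 h0)
    have hf0 : f = 0 := (esymm_zero_iff f).1 hx0
    simp [Set.mem_setOf_eq, hf0]
  · simp only [Set.mem_setOf_eq]
    calc ∑ i, c i * f i = ∑ i, x i * c i := by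
          refine Finset.sum_congr rfl fun i _ => ?_
          rw [hxi i]; ring
      _ = 0 := h0

lemma sphere_null_quadeq {S₁ S₂ : Mat d} (h₁ : S₁.PosDef) (h₂ : S₂.PosDef) (hS : S₁ ≠ S₂) :
    unifSphere d {v : E d |
      Real.log (Real.sqrt (quad v S₁)) = Real.log (Real.sqrt (quad v S₂))} = 0 := by
  set D := S₁ - S₂ with hD
  have hsym₁ : ∀ a b, S₁ a b = S₁ b a := fun a b => by
    conv_lhs => rw [← h₁.1]
    simp [Matrix.conjTranspose_apply]
  have hsym₂ : ∀ a b, S₂ a b = S₂ b a := fun a b => by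
    conv_lhs => rw [← h₂.1]
    simp [Matrix.conjTranspose_apply]
  have hsym : ∀ a b, D a b = D b a := fun a b => by
    simp [hD, Matrix.sub_apply, hsym₁ a b, hsym₂ a b]
  obtain ⟨i, j, hij⟩ : ∃ i j, D i j ≠ 0 := by
    by_contra h
    push_neg at h
    apply hS
    have : D = 0 := by ext a b; exact h a b
    have := sub_eq_zero.1 (hD ▸ this)
    exact this
  have hSm : MeasurableSet {v : E d |
      Real.log (Real.sqrt (quad v S₁)) = Real.log (Real.sqrt (quad v S₂))} := by
    refine measurableSet_eq_fun ?_ ?_ <;>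
      exact Real.measurable_log.comp (Real.continuous_sqrt.measurable.comp (meas_quadv _))
  rw [unifSphere_apply hSm]
  refine measure_mono_null ?_ (piG_quad_null D hsym hij)
  intro f hf
  simp only [Set.mem_preimage, Set.mem_setOf_eq] at hf
  set x := (MeasurableEquiv.toLp 2 (Fin d → ℝ)) f with hx
  have hxi : ∀ i, x i = f i := fun i => by rw [hx]; exact esymm_apply f i
  have hsum : ∑ a, ∑ b, f a * D a b * f b = quad x D := by
    unfold quad
    refine Finset.sum_congr rfl fun a _ => Finset.sum_congr rfl fun b _ => ?_
    rw [hxi a, hxi b]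
  by_cases hx0 : x = 0
  · have hf0 : f = 0 := (esymm_zero_iff f).1 hx0
    simp [Set.mem_setOf_eq, hf0]
  · have hv : (‖x‖⁻¹ • x : E d) ≠ 0 :=
      smul_ne_zero (inv_ne_zero (norm_ne_zero_iff.2 hx0)) hx0
    have q1 : 0 < quad (‖x‖⁻¹ • x) S₁ := quad_pos h₁ hv
    have q2 : 0 < quad (‖x‖⁻¹ • x) S₂ := quad_pos h₂ hv
    have hsq : Real.sqrt (quad (‖x‖⁻¹ • x) S₁) = Real.sqrt (quad (‖x‖⁻¹ • x) S₂) := by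
      rw [← Real.exp_log (Real.sqrt_pos.2 q1), hf, Real.exp_log (Real.sqrt_pos.2 q2)]
    have hq : quad (‖x‖⁻¹ • x) S₁ = quad (‖x‖⁻¹ • x) S₂ :=
      (Real.sqrt_inj q1.le q2.le).1 hsq
    rw [quad_smul, quad_smul] at hq
    have hxq : quad x S₁ = quad x S₂ :=
      mul_left_cancel₀ (pow_ne_zero 2 (inv_ne_zero (norm_ne_zero_iff.2 hx0))) hq
    show _ = 0
    rw [hsum, hD, quad_sub, hxq, sub_self]

lemma sphere_null_pair {μ₁ μ₂ : E d} {S₁ S₂ : Mat d} (h₁ : S₁.PosDef) (h₂ : S₂.PosDef)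
    (hne : μ₁ ≠ μ₂ ∨ S₁ ≠ S₂) :
    unifSphere d {v : E d | ⟪v, μ₁ - μ₂⟫ = 0 ∧
      Real.log (Real.sqrt (quad v S₁)) = Real.log (Real.sqrt (quad v S₂))} = 0 := by
  rcases hne with h | h
  · exact measure_mono_null (fun v hv => hv.1) (sphere_null_linear (sub_ne_zero_of_ne h))
  · exact measure_mono_null (fun v hv => hv.2) (sphere_null_quadeq h₁ h₂ h)

lemma circle_null {a b : ℝ} (hab : ¬(a = 0 ∧ b = 0)) :
    unifSphere 2 {w : E 2 | w 0 * a + w 1 * b = 0} = 0 := by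
  have hSm : MeasurableSet {w : E 2 | w 0 * a + w 1 * b = 0} :=
    measurableSet_eq_fun
      (((meas_eval 0).mul_const a).add ((meas_eval 1).mul_const b)) measurable_const
  rw [unifSphere_apply hSm]
  set c : Fin 2 → ℝ := ![a, b] with hc
  obtain ⟨k, hk⟩ : ∃ k, c k ≠ 0 := by
    rcases not_and_or.1 hab with h | h
    · exact ⟨0, by simpa [hc] using h⟩
    · exact ⟨1, by simpa [hc] using h⟩
  refine measure_mono_null ?_ (piG_linear_null c hk)
  intro f hf
  simp only [Set.mem_preimage, Set.mem_setOf_eq] at hf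
  set x := (MeasurableEquiv.toLp 2 (Fin 2 → ℝ)) f with hx
  have hxi : ∀ i, x i = f i := fun i => by rw [hx]; exact esymm_apply f i
  have key : (‖x‖⁻¹ • x : E 2) 0 * a + (‖x‖⁻¹ • x : E 2) 1 * b
      = ‖x‖⁻¹ * (f 0 * a + f 1 * b) := by
    simp only [PiLp.smul_apply, smul_eq_mul, hxi]
    ring
  rw [key] at hf
  rcases mul_eq_zero.1 hf with h0 | h0
  · have hx0 : x = 0 := norm_eq_zero.1 (inv_eq_zero.1 h0)
    have hf0 : f = 0 := (esymm_zero_iff f).1 hx0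
    simp [Set.mem_setOf_eq, hf0]
  · simp only [Set.mem_setOf_eq, Fin.sum_univ_two, hc]
    simp only [Matrix.cons_val_zero, Matrix.cons_val_one, Matrix.head_cons]
    linarith

end Aux2
section Aux3

variable {d : ℕ}

lemma meas_proj (w : E 2) (v : E d) : Measurable (projSMix w v) := by
  unfold projSMix
  have h1 : Measurable fun x : E d × PDMat d => ⟪v, x.1⟫ :=
    (continuous_const.inner continuous_id).measurable.comp measurable_fst
  have h2 : Measurable fun x : E d × PDMat d => quad v x.2.1 :=
    (meas_quadM v).comp (measurable_subtype_coe.comp measurable_snd)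
  exact (h1.const_mul _).add
    ((Real.measurable_log.comp (Real.continuous_sqrt.measurable.comp h2)).const_mul _)

lemma meas_projwv (x : E d × PDMat d) :
    Measurable fun wv : E 2 × E d => projSMix wv.1 wv.2 x := by
  unfold projSMix
  have h0 : Measurable fun wv : E 2 × E d => wv.1 0 := (meas_eval 0).comp measurable_fst
  have h1 : Measurable fun wv : E 2 × E d => wv.1 1 := (meas_eval 1).comp measurable_fst
  have h2 : Measurable fun wv : E 2 × E d => ⟪wv.2, x.1⟫ :=
    (continuous_id.inner continuous_const).measurable.comp measurable_snd
  have h3 : Measurable fun wv : E 2 × E d => quad wv.2 x.2.1 :=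
    (meas_quadv x.2.1).comp measurable_snd
  exact (h0.mul h2).add
    (h1.mul (Real.measurable_log.comp (Real.continuous_sqrt.measurable.comp h3)))

lemma meas_cost {p : ℝ} (hp : 0 ≤ p) :
    Measurable fun z : ℝ × ℝ => ENNReal.ofReal (|z.1 - z.2| ^ p) :=
  (((Real.continuous_rpow_const hp).comp
    ((continuous_fst.sub continuous_snd).abs)).measurable).ennreal_ofReal

lemma wp_self {p : ℝ} (hp : 1 ≤ p) (ν : Measure ℝ) : Wp p ν ν = 0 := by
  refine le_antisymm ?_ (zero_le)
  unfold Wp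
  have hdiag : Measurable fun x : ℝ => (x, x) := measurable_id.prodMk measurable_id
  have hc : IsCoupling (ν.map fun x : ℝ => (x, x)) ν ν := by
    constructor
    · rw [Measure.map_map measurable_fst hdiag]
      simp [Function.comp_def]
    · rw [Measure.map_map measurable_snd hdiag]
      simp [Function.comp_def]
  refine le_trans (iInf₂_le (ν.map fun x : ℝ => (x, x)) hc) (le_of_eq ?_)
  rw [lintegral_map (meas_cost (by linarith)) hdiag]
  simp [Real.zero_rpow (by linarith : p ≠ 0)]

lemma wp_symm {p : ℝ} (hp : 1 ≤ p) (ν₁ ν₂ : Measure ℝ) : Wp p ν₁ ν₂ = Wp p ν₂ ν₁ := by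
  have key : ∀ ν₁ ν₂ : Measure ℝ, Wp p ν₂ ν₁ ≤ Wp p ν₁ ν₂ := by
    intro ν₁ ν₂
    unfold Wp
    refine le_iInf₂ fun π hπ => ?_
    have hswap : IsCoupling (π.map Prod.swap) ν₂ ν₁ := by
      constructor
      · rw [Measure.map_map measurable_fst measurable_swap]
        exact hπ.2
      · rw [Measure.map_map measurable_snd measurable_swap]
        exact hπ.1
    refine le_trans (iInf₂_le (π.map Prod.swap) hswap) (le_of_eq ?_)
    rw [lintegral_map (meas_cost (by linarith)) measurable_swap]
    refine lintegral_congr fun z => ?_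
    rw [abs_sub_comm]
    rfl
  exact le_antisymm (key ν₂ ν₁) (key ν₁ ν₂)

lemma wp_lb {p : ℝ} (hp : 1 ≤ p) {A : Finset ℝ} {t₀ : ℝ} {ν₁ ν₂ : Measure ℝ}
    (hν₂A : ν₂ (↑A : Set ℝ)ᶜ = 0) (hlt : ν₂ {t₀} < ν₁ {t₀}) {ε : ℝ} (hε : 0 < ε)
    (hgap : ∀ s ∈ A, s ≠ t₀ → ε ≤ |t₀ - s|) :
    ENNReal.ofReal (ε ^ p) * (ν₁ {t₀} - ν₂ {t₀}) ≤ Wp p ν₁ ν₂ := by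
  unfold Wp
  refine le_iInf₂ fun π hπ => ?_
  set S : Set (ℝ × ℝ) := {z | z.1 = t₀ ∧ z.2 ≠ t₀ ∧ z.2 ∈ (↑A : Set ℝ)} with hS
  have hAm : MeasurableSet (↑A : Set ℝ) := A.finite_toSet.measurableSet
  have hSm : MeasurableSet S := by
    refine MeasurableSet.inter (measurable_fst (measurableSet_singleton t₀)) ?_
    exact MeasurableSet.inter (measurable_snd (measurableSet_singleton t₀).compl)
      (measurable_snd hAm)
  have hbound : ∀ z : ℝ × ℝ,
      S.indicator (fun _ => ENNReal.ofReal (ε ^ p)) z ≤ ENNReal.ofReal (|z.1 - z.2| ^ p) := by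
    intro z
    by_cases hz : z ∈ S
    · rw [Set.indicator_of_mem hz]
      apply ENNReal.ofReal_le_ofReal
      apply Real.rpow_le_rpow hε.le _ (le_trans zero_le_one hp)
      have := hgap z.2 hz.2.2 hz.2.1
      calc ε ≤ |t₀ - z.2| := this
        _ = |z.1 - z.2| := by rw [hz.1]
    · rw [Set.indicator_of_notMem hz]
      exact zero_le
  have hcost : ENNReal.ofReal (ε ^ p) * π S ≤ ∫⁻ z, ENNReal.ofReal (|z.1 - z.2| ^ p) ∂π :=
    calc ENNReal.ofReal (ε ^ p) * π S
        = ∫⁻ z, S.indicator (fun _ => ENNReal.ofReal (ε ^ p)) z ∂π :=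
          (lintegral_indicator_const hSm _).symm
      _ ≤ _ := lintegral_mono hbound
  have h1 : π (Prod.fst ⁻¹' {t₀}) = ν₁ {t₀} := by
    rw [← hπ.1, Measure.map_apply measurable_fst (measurableSet_singleton _)]
  have h2 : π (Prod.snd ⁻¹' {t₀}) = ν₂ {t₀} := by
    rw [← hπ.2, Measure.map_apply measurable_snd (measurableSet_singleton _)]
  have h3 : π (Prod.snd ⁻¹' (↑A : Set ℝ)ᶜ) = 0 := by
    rw [← Measure.map_apply measurable_snd hAm.compl, hπ.2]
    exact hν₂A
  have hsub : Prod.fst ⁻¹' ({t₀} : Set ℝ)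
      ⊆ S ∪ (Prod.snd ⁻¹' ({t₀} : Set ℝ) ∪ Prod.snd ⁻¹' (↑A : Set ℝ)ᶜ) := by
    rintro z hz
    by_cases h2' : z.2 = t₀
    · exact Or.inr (Or.inl h2')
    · by_cases hA' : z.2 ∈ (↑A : Set ℝ)
      · exact Or.inl ⟨hz, h2', hA'⟩
      · exact Or.inr (Or.inr hA')
  have hπS : ν₁ {t₀} - ν₂ {t₀} ≤ π S := by
    refine tsub_le_iff_right.2 ?_
    calc ν₁ {t₀} = π (Prod.fst ⁻¹' {t₀}) := h1.symm
      _ ≤ π (S ∪ (Prod.snd ⁻¹' ({t₀} : Set ℝ) ∪ Prod.snd ⁻¹' (↑A : Set ℝ)ᶜ)) :=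
          measure_mono hsub
      _ ≤ π S + π (Prod.snd ⁻¹' ({t₀} : Set ℝ) ∪ Prod.snd ⁻¹' (↑A : Set ℝ)ᶜ) :=
          measure_union_le _ _
      _ ≤ π S + (π (Prod.snd ⁻¹' ({t₀} : Set ℝ)) + π (Prod.snd ⁻¹' (↑A : Set ℝ)ᶜ)) :=
          add_le_add le_rfl (measure_union_le _ _)
      _ = π S + ν₂ {t₀} := by rw [h2, h3, add_zero]
  exact le_trans (mul_le_mul_right hπS _) hcost

end Aux3
section Aux4

variable {d : ℕ}

lemma finsupp_ext {X : Type*} [MeasurableSpace X] [MeasurableSingletonClass X]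
    (G₁ G₂ : Measure X) (T : Finset X) (h1 : G₁ (↑T : Set X)ᶜ = 0) (h2 : G₂ (↑T : Set X)ᶜ = 0)
    (h : ∀ x ∈ T, G₁ {x} = G₂ {x}) : G₁ = G₂ := by
  classical
  have key : ∀ G : Measure X, G (↑T : Set X)ᶜ = 0 → ∀ E : Set X, MeasurableSet E →
      G E = ∑ x ∈ T.filter (· ∈ E), G {x} := by
    intro G hG E _
    have hTm : MeasurableSet (↑T : Set X) := T.finite_toSet.measurableSet
    have hd : G (E \ ↑T) = 0 := measure_mono_null (fun x hx => hx.2) hG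
    have hsplit : G E = G (E ∩ ↑T) := by
      rw [← measure_inter_add_diff E hTm, hd, add_zero]
    have hset : E ∩ ↑T = ⋃ x ∈ T.filter (· ∈ E), ({x} : Set X) := by
      ext y
      simp only [Set.mem_inter_iff, Set.mem_iUnion, Finset.mem_filter, Finset.mem_coe,
        Set.mem_singleton_iff]
      constructor
      · rintro ⟨hyE, hyT⟩
        exact ⟨y, ⟨hyT, hyE⟩, rfl⟩
      · rintro ⟨x, ⟨hxT, hxE⟩, rfl⟩
        exact ⟨hxE, hxT⟩
    rw [hsplit, hset,
      measure_biUnion_finset ?_ fun x _ => measurableSet_singleton x]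
    intro x _ y _ hxy
    exact Set.disjoint_singleton.2 hxy
  ext E hE
  rw [key G₁ h1 E hE, key G₂ h2 E hE]
  exact Finset.sum_congr rfl fun x hx => h x (Finset.mem_filter.1 hx).1

lemma prodZ_null {x y : E d × PDMat d} (hxy : x ≠ y) :
    ((unifSphere 2).prod (unifSphere d))
      {wv : E 2 × E d | projSMix wv.1 wv.2 x = projSMix wv.1 wv.2 y} = 0 := by
  set Z := {wv : E 2 × E d | projSMix wv.1 wv.2 x = projSMix wv.1 wv.2 y} with hZ
  have hZm : MeasurableSet Z := measurableSet_eq_fun (meas_projwv x) (meas_projwv y)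
  have hswap : ((unifSphere 2).prod (unifSphere d)) Z
      = ((unifSphere d).prod (unifSphere 2)) (Prod.swap ⁻¹' Z) := by
    rw [← Measure.prod_swap, Measure.map_apply measurable_swap hZm]
  rw [hswap, Measure.prod_apply (measurable_swap hZm)]
  set a : E d → ℝ := fun v => ⟪v, x.1 - y.1⟫ with ha
  set b : E d → ℝ := fun v => Real.log (Real.sqrt (quad v x.2.1))
      - Real.log (Real.sqrt (quad v y.2.1)) with hb
  have hsec : ∀ v : E d, ¬(a v = 0 ∧ b v = 0) →
      unifSphere 2 (Prod.mk v ⁻¹' (Prod.swap ⁻¹' Z)) = 0 := by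
    intro v hv
    have hid : ∀ w : E 2, w 0 * a v + w 1 * b v = projSMix w v x - projSMix w v y := by
      intro w
      simp only [projSMix, ha, hb, inner_sub_right]
      ring
    have hseteq : (Prod.mk v ⁻¹' (Prod.swap ⁻¹' Z))
        = {w : E 2 | w 0 * a v + w 1 * b v = 0} := by
      ext w
      simp only [Set.mem_preimage, Prod.swap_prod_mk, hZ, Set.mem_setOf_eq]
      rw [← sub_eq_zero, ← hid w]
    rw [hseteq]
    exact circle_null hv
  have hne : x.1 ≠ y.1 ∨ x.2.1 ≠ y.2.1 := by
    by_contra h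
    push_neg at h
    exact hxy (Prod.ext h.1 (Subtype.ext h.2))
  have hN : unifSphere d {v : E d | a v = 0 ∧ b v = 0} = 0 := by
    refine measure_mono_null ?_ (sphere_null_pair x.2.2 y.2.2 hne)
    intro v hv
    exact ⟨hv.1, sub_eq_zero.1 hv.2⟩
  have hae : ∀ᵐ v ∂(unifSphere d), v ∉ {v : E d | a v = 0 ∧ b v = 0} :=
    measure_eq_zero_iff_ae_notMem.1 hN
  rw [lintegral_congr_ae (hae.mono fun v hv => hsec v hv)]
  exact lintegral_zero

end Aux4
/-- identity of indiscernibles part of Theorem 2 of the paper: for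
finitely supported probability measures on `ℝ^d × S_d^{++}(ℝ)`,
`SMix-W_p^p(G₁,G₂) = 0 ↔ G₁ = G₂`. -/
theorem statement16 (d : ℕ) (hd : 1 ≤ d) (p : ℝ) (hp : 1 ≤ p)
    (G₁ G₂ : Measure (E d × PDMat d))
    [IsProbabilityMeasure G₁] [IsProbabilityMeasure G₂]
    (hf₁ : FinSupp G₁) (hf₂ : FinSupp G₂) :
    SMixW d p G₁ G₂ = 0 ↔ G₁ = G₂ := by
  constructor
  · intro h0
    by_contra hne
    classical
    obtain ⟨T₁, hT₁⟩ := hf₁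
    obtain ⟨T₂, hT₂⟩ := hf₂
    set T : Finset (E d × PDMat d) := T₁ ∪ T₂ with hT
    have hG₁T : G₁ (↑T : Set (E d × PDMat d))ᶜ = 0 := by
      refine measure_mono_null (Set.compl_subset_compl.2 ?_) hT₁
      exact fun z hz => Finset.mem_coe.2 (Finset.mem_union_left _ (Finset.mem_coe.1 hz))
    have hG₂T : G₂ (↑T : Set (E d × PDMat d))ᶜ = 0 := by
      refine measure_mono_null (Set.compl_subset_compl.2 ?_) hT₂
      exact fun z hz => Finset.mem_coe.2 (Finset.mem_union_right _ (Finset.mem_coe.1 hz))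
    obtain ⟨x₀, hx₀T, hx₀⟩ : ∃ x ∈ T, G₁ {x} ≠ G₂ {x} := by
      by_contra hall
      push_neg at hall
      exact hne (finsupp_ext G₁ G₂ T hG₁T hG₂T hall)
    obtain ⟨y₀, hy₀T, hy₀⟩ : ∃ y ∈ T, y ≠ x₀ := by
      by_contra hy
      push_neg at hy
      have hsub : (↑T : Set (E d × PDMat d)) ⊆ {x₀} := fun z hz => hy z (Finset.mem_coe.1 hz)
      have hc1 : G₁ ({x₀} : Set (E d × PDMat d))ᶜ = 0 :=
        measure_mono_null (Set.compl_subset_compl.2 hsub) hG₁T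
      have hc2 : G₂ ({x₀} : Set (E d × PDMat d))ᶜ = 0 :=
        measure_mono_null (Set.compl_subset_compl.2 hsub) hG₂T
      have e1 : G₁ {x₀} = 1 := (prob_compl_eq_zero_iff (measurableSet_singleton x₀)).1 hc1
      have e2 : G₂ {x₀} = 1 := (prob_compl_eq_zero_iff (measurableSet_singleton x₀)).1 hc2
      exact hx₀ (e1.trans e2.symm)
    set R := T.offDiag with hR
    have hRne : R.Nonempty := ⟨(y₀, x₀), Finset.mem_offDiag.2 ⟨hy₀T, hx₀T, hy₀⟩⟩
    -- the sets on which all pairwise projections are `ε`-separated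
    set An : ℕ → Set (E 2 × E d) := fun n =>
      ⋂ pr ∈ R, {wv : E 2 × E d |
        ((n : ℝ) + 1)⁻¹ ≤ |projSMix wv.1 wv.2 pr.1 - projSMix wv.1 wv.2 pr.2|} with hAn
    have hAnm : ∀ n, MeasurableSet (An n) := fun n =>
      MeasurableSet.biInter R.countable_toSet fun pr _ =>
        measurableSet_le measurable_const (((meas_projwv pr.1).sub (meas_projwv pr.2)).abs)
    have hmono : Monotone An := by
      intro m n hmn
      refine Set.iInter₂_mono fun pr _ => fun wv hwv => ?_
      simp only [Set.mem_setOf_eq] at hwv ⊢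
      refine le_trans ?_ hwv
      have h1 : (0:ℝ) < (m:ℝ) + 1 := by positivity
      have h2 : (m:ℝ) + 1 ≤ (n:ℝ) + 1 := by
        have := (Nat.cast_le (α := ℝ)).2 hmn
        linarith
      exact inv_anti₀ h1 h2
    -- the good set has full measure
    set Good : Set (E 2 × E d) :=
      ⋂ pr ∈ R, {wv : E 2 × E d |
        projSMix wv.1 wv.2 pr.1 ≠ projSMix wv.1 wv.2 pr.2} with hGood
    have hGoodm : MeasurableSet Good :=
      MeasurableSet.biInter R.countable_toSet fun pr _ =>
        (measurableSet_eq_fun (meas_projwv pr.1) (meas_projwv pr.2)).compl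
    have hGoodc : ((unifSphere 2).prod (unifSphere d)) Goodᶜ = 0 := by
      have hceq : Goodᶜ = ⋃ pr ∈ R, {wv : E 2 × E d |
          projSMix wv.1 wv.2 pr.1 = projSMix wv.1 wv.2 pr.2} := by
        rw [hGood, Set.compl_iInter₂]
        refine Set.iUnion₂_congr fun pr _ => ?_
        ext wv
        simp [Set.mem_compl_iff]
      rw [hceq]
      refine (measure_biUnion_null_iff R.countable_toSet).2 fun pr hpr => ?_
      exact prodZ_null (Finset.mem_offDiag.1 hpr).2.2
    have hGood1 : ((unifSphere 2).prod (unifSphere d)) Good = 1 :=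
      (prob_compl_eq_zero_iff hGoodm).1 hGoodc
    have hGsub : Good ⊆ ⋃ n, An n := by
      intro wv hwv
      have hwv' := Set.mem_iInter₂.1 hwv
      set m := R.inf' hRne
        (fun pr => |projSMix wv.1 wv.2 pr.1 - projSMix wv.1 wv.2 pr.2|) with hm
      have hmpos : 0 < m := by
        rw [hm, Finset.lt_inf'_iff]
        intro pr hpr
        exact abs_pos.2 (sub_ne_zero_of_ne (hwv' pr hpr))
      obtain ⟨n, hn⟩ := exists_nat_gt m⁻¹
      refine Set.mem_iUnion.2 ⟨n, Set.mem_iInter₂.2 fun pr hpr => ?_⟩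
      have h1 : ((n:ℝ) + 1)⁻¹ < m := by
        refine inv_lt_of_inv_lt₀ hmpos ?_
        exact hn.trans (lt_add_one _)
      exact le_trans h1.le (Finset.inf'_le _ hpr)
    obtain ⟨n, hnpos⟩ : ∃ n, 0 < ((unifSphere 2).prod (unifSphere d)) (An n) := by
      by_contra hno
      push_neg at hno
      have hz : ∀ n, ((unifSphere 2).prod (unifSphere d)) (An n) = 0 :=
        fun n => le_antisymm (hno n) (zero_le)
      have : ((unifSphere 2).prod (unifSphere d)) (⋃ n, An n) = 0 := by
        rw [(hmono.directed_le).measure_iUnion]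
        simp [hz]
      have h1 : (1 : ℝ≥0∞) ≤ 0 := by
        calc (1 : ℝ≥0∞) = ((unifSphere 2).prod (unifSphere d)) Good := hGood1.symm
          _ ≤ ((unifSphere 2).prod (unifSphere d)) (⋃ n, An n) := measure_mono hGsub
          _ = 0 := this
      simp at h1
    set ε : ℝ := ((n : ℝ) + 1)⁻¹ with hε
    have εpos : 0 < ε := by rw [hε]; positivity
    set δ : ℝ≥0∞ := max (G₁ {x₀} - G₂ {x₀}) (G₂ {x₀} - G₁ {x₀}) with hδdef
    have hδpos : 0 < δ := by
      rcases lt_or_gt_of_ne hx₀ with hlt | hlt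
      · exact lt_of_lt_of_le (tsub_pos_of_lt hlt) (le_max_right _ _)
      · exact lt_of_lt_of_le (tsub_pos_of_lt hlt) (le_max_left _ _)
    set c : ℝ≥0∞ := ENNReal.ofReal (ε ^ p) * δ with hc
    have hcpos : 0 < c := by
      rw [hc]
      exact ENNReal.mul_pos
        (ne_of_gt (ENNReal.ofReal_pos.2 (Real.rpow_pos_of_pos εpos p))) (ne_of_gt hδpos)
    -- the pointwise lower bound on the good sets
    have hbound : ∀ wv : E 2 × E d, wv ∈ An n →
        c ≤ Wp p (G₁.map (projSMix wv.1 wv.2)) (G₂.map (projSMix wv.1 wv.2)) := by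
      rintro ⟨w, v⟩ hwv
      have hAnmem := Set.mem_iInter₂.1 hwv
      have hinj : ∀ z ∈ T, projSMix w v z = projSMix w v x₀ → z = x₀ := by
        intro z hzT heq
        by_contra hzx
        have hpr : (z, x₀) ∈ R := Finset.mem_offDiag.2 ⟨hzT, hx₀T, hzx⟩
        have hge := hAnmem (z, x₀) hpr
        simp only [Set.mem_setOf_eq, heq, sub_self, abs_zero] at hge
        linarith [εpos]
      set t₀ := projSMix w v x₀ with ht₀
      set A : Finset ℝ := T.image (projSMix w v) with hA
      have hν : ∀ G : Measure (E d × PDMat d), G (↑T : Set (E d × PDMat d))ᶜ = 0 →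
          (G.map (projSMix w v)) {t₀} = G {x₀} := by
        intro G hG
        rw [Measure.map_apply (meas_proj w v) (measurableSet_singleton _)]
        have hip : projSMix w v ⁻¹' {t₀} ∩ ↑T = {x₀} := by
          ext z
          simp only [Set.mem_inter_iff, Set.mem_preimage, Set.mem_singleton_iff,
            Finset.mem_coe]
          constructor
          · rintro ⟨hz1, hz2⟩
            exact hinj z hz2 hz1
          · rintro rfl
            exact ⟨rfl, hx₀T⟩
        have hTm : MeasurableSet (↑T : Set (E d × PDMat d)) := T.finite_toSet.measurableSet
        have hdiff : G (projSMix w v ⁻¹' {t₀} \ ↑T) = 0 :=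
          measure_mono_null (fun z hz => hz.2) hG
        rw [← measure_inter_add_diff (projSMix w v ⁻¹' {t₀}) hTm, hip, hdiff, add_zero]
      have hνA : ∀ G : Measure (E d × PDMat d), G (↑T : Set (E d × PDMat d))ᶜ = 0 →
          (G.map (projSMix w v)) (↑A : Set ℝ)ᶜ = 0 := by
        intro G hG
        rw [Measure.map_apply (meas_proj w v) A.finite_toSet.measurableSet.compl]
        refine measure_mono_null ?_ hG
        intro z hz
        intro hzT
        exact hz (Finset.mem_coe.2 (Finset.mem_image_of_mem _ (Finset.mem_coe.1 hzT)))
      have hgap : ∀ s ∈ A, s ≠ t₀ → ε ≤ |t₀ - s| := by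
        intro s hs hst
        obtain ⟨z, hzT, rfl⟩ := Finset.mem_image.1 hs
        have hzx : z ≠ x₀ := fun h => hst (by rw [h])
        have hpr : (x₀, z) ∈ R := Finset.mem_offDiag.2 ⟨hx₀T, hzT, fun h => hzx h.symm⟩
        exact hAnmem (x₀, z) hpr
      have ht₀A : t₀ ∈ A := Finset.mem_image_of_mem _ hx₀T
      rcases lt_or_gt_of_ne hx₀ with hlt | hlt
      · -- G₁ {x₀} < G₂ {x₀}
        have hb := wp_lb hp (hνA G₁ hG₁T)
          (show (G₁.map (projSMix w v)) {t₀} < (G₂.map (projSMix w v)) {t₀} by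
            rw [hν G₁ hG₁T, hν G₂ hG₂T]; exact hlt) εpos hgap
        rw [hν G₁ hG₁T, hν G₂ hG₂T] at hb
        have hδeq : δ = G₂ {x₀} - G₁ {x₀} := by
          rw [hδdef, tsub_eq_zero_of_le hlt.le, max_eq_right (zero_le)]
        rw [hc, hδeq, wp_symm hp]
        exact hb
      · -- G₂ {x₀} < G₁ {x₀}
        have hb := wp_lb hp (hνA G₂ hG₂T)
          (show (G₂.map (projSMix w v)) {t₀} < (G₁.map (projSMix w v)) {t₀} by
            rw [hν G₁ hG₁T, hν G₂ hG₂T]; exact hlt) εpos hgap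
        rw [hν G₁ hG₁T, hν G₂ hG₂T] at hb
        have hδeq : δ = G₁ {x₀} - G₂ {x₀} := by
          rw [hδdef, tsub_eq_zero_of_le hlt.le, max_eq_left (zero_le)]
        rw [hc, hδeq]
        exact hb
    -- integrate the lower bound
    have hlow : c * ((unifSphere 2).prod (unifSphere d)) (An n) ≤ SMixW d p G₁ G₂ := by
      unfold SMixW
      have step1 : ∀ w : E 2, ∫⁻ v, (An n).indicator (fun _ => c) (w, v) ∂(unifSphere d)
          = c * (unifSphere d) (Prod.mk w ⁻¹' An n) := by
        intro w
        rw [show (fun v => (An n).indicator (fun _ => c) (w, v))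
            = (Prod.mk w ⁻¹' An n).indicator (fun _ => c) from funext fun v => by
              simp [Set.indicator_apply, Set.mem_preimage]]
        exact lintegral_indicator_const (measurable_prodMk_left (hAnm n)) c
      calc c * ((unifSphere 2).prod (unifSphere d)) (An n)
          = c * ∫⁻ w, (unifSphere d) (Prod.mk w ⁻¹' An n) ∂(unifSphere 2) := by
            rw [Measure.prod_apply (hAnm n)]
        _ = ∫⁻ w, c * (unifSphere d) (Prod.mk w ⁻¹' An n) ∂(unifSphere 2) :=
            (lintegral_const_mul c (measurable_measure_prodMk_left (hAnm n))).symm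
        _ = ∫⁻ w, ∫⁻ v, (An n).indicator (fun _ => c) (w, v) ∂(unifSphere d)
              ∂(unifSphere 2) := lintegral_congr fun w => (step1 w).symm
        _ ≤ ∫⁻ w, ∫⁻ v, Wp p (G₁.map (projSMix w v)) (G₂.map (projSMix w v))
              ∂(unifSphere d) ∂(unifSphere 2) := by
            refine lintegral_mono fun w => lintegral_mono fun v => ?_
            by_cases hm : (w, v) ∈ An n
            · rw [Set.indicator_of_mem hm]
              exact hbound (w, v) hm
            · rw [Set.indicator_of_notMem hm]
              exact zero_le
    rw [h0] at hlow
    have hzero : c * ((unifSphere 2).prod (unifSphere d)) (An n) = 0 :=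
      le_antisymm hlow (zero_le)
    exact absurd hzero (ENNReal.mul_pos (ne_of_gt hcpos) (ne_of_gt hnpos)).ne'
  · rintro rfl
    unfold SMixW
    simp only [wp_self hp, lintegral_zero]

end PaperSOT
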